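/- If T ∈ B(H) is an m-isometry for some m ≥ 1, then the spectral radius of T equals 1. -/

import Mathlib

/-!
For an `m`-isometry `T` and a vector `x`, the identity defining `T` at `Tʸ x` says that the
`m`-th forward difference of `n ↦ ‖Tⁿ x‖²` vanishes at `y`. So this sequence is a polynomial in
`n` of degree `< m`, with coefficients bounded by its first `m` values, hence by a multiple of
`‖x‖²`. Thus `‖Tⁿ‖` grows polynomially, and since `λⁿ ∈ σ(Tⁿ)`, every spectral value has
`|λ| ≤ 1`. If the spectral radius were `< 1`, Gelfand's formula would give `Tⁿ → 0`; but a
polynomial sequence tending to `0` is zero, so `‖x‖² = 0` for every `x`.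
-/

open Finset Filter Function Asymptotics Topology
open scoped fwdDiff

section FwdDiff

variable {G : Type*} [AddCommGroup G]

lemma fwdDiff_iter_eq_zero_of_le {M : Type*} [AddCommMonoid M] {h : M} {f : M → G} {m k : ℕ}
    (hf : (Δ_[h])^[m] f = 0) (hk : m ≤ k) : (Δ_[h])^[k] f = 0 := by
  obtain ⟨i, rfl⟩ := Nat.exists_eq_add_of_le hk
  rw [add_comm, iterate_add_apply, hf]
  exact iterate_fixed (fwdDiff_const h 0) i

lemma eq_sum_choose_smul_fwdDiff_iter_of_fwdDiff_iter_eq_zero {f : ℕ → G} {m : ℕ}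
    (hf : (Δ_[1])^[m] f = 0) (n : ℕ) :
    f n = ∑ k ∈ range m, n.choose k • (Δ_[1])^[k] f 0 := by
  have newton := shift_eq_sum_fwdDiff_iter 1 f n 0
  rw [zero_add, nsmul_one, Nat.cast_id] at newton
  rw [newton]
  rcases le_total (n + 1) m with h | h
  · refine sum_subset (range_subset_range.mpr h) fun k _ hk => ?_
    rw [Nat.choose_eq_zero_of_lt (by simpa using hk), zero_smul]
  · refine (sum_subset (range_subset_range.mpr h) fun k _ hk => ?_).symm
    rw [fwdDiff_iter_eq_zero_of_le hf (by simpa using hk), Pi.zero_apply, smul_zero]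

lemma eq_zero_of_fwdDiff_iter_eq_zero_of_tendsto [TopologicalSpace G] [IsTopologicalAddGroup G]
    [T2Space G] {f : ℕ → G} {m : ℕ} (hf : (Δ_[1])^[m] f = 0) (hlim : Tendsto f atTop (𝓝 0)) :
    f = 0 := by
  induction m generalizing f with
  | zero => exact hf
  | succ m ih =>
    have hΔlim : Tendsto (Δ_[1] f) atTop (𝓝 0) := by
      have h := (hlim.comp (tendsto_add_atTop_nat 1)).sub hlim
      rwa [sub_zero] at h
    have hΔ : Δ_[1] f = 0 := ih (by rwa [← iterate_succ_apply]) hΔlim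
    have hconst : ∀ n, f n = f 0 := Nat.rec rfl fun n hn =>
      (sub_eq_zero.mp (congrFun hΔ n)).trans hn
    have hf0 : f 0 = 0 := tendsto_nhds_unique tendsto_const_nhds (hlim.congr hconst)
    exact funext fun n => (hconst n).trans hf0

end FwdDiff

section Normed

variable {G : Type*} [SeminormedAddCommGroup G]

lemma norm_fwdDiff_iter_le {f : ℕ → G} {k : ℕ} {B : ℝ} (hB : ∀ i ≤ k, ‖f i‖ ≤ B) :
    ‖(Δ_[1])^[k] f 0‖ ≤ 2 ^ k * B := by
  rw [fwdDiff_iter_eq_sum_shift]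
  calc ‖∑ i ∈ range (k + 1), ((-1 : ℤ) ^ (k - i) * k.choose i) • f (0 + i • 1)‖
      ≤ ∑ i ∈ range (k + 1), (k.choose i : ℝ) * B := by
        refine norm_sum_le_of_le _ fun i hi => ?_
        refine (norm_zsmul_le _ _).trans ?_
        simp only [norm_mul, norm_pow, norm_neg, norm_one, one_pow, one_mul, Int.norm_natCast,
          zero_add, nsmul_one, Nat.cast_id]
        exact mul_le_mul_of_nonneg_left (hB i (Nat.lt_succ_iff.mp (mem_range.mp hi)))
          (Nat.cast_nonneg _)
    _ = 2 ^ k * B := by rw [← sum_mul]; norm_cast; rw [Nat.sum_range_choose]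

lemma norm_le_of_fwdDiff_iter_eq_zero {f : ℕ → G} {m : ℕ} (hf : (Δ_[1])^[m] f = 0) {B : ℝ}
    (hB : ∀ i < m, ‖f i‖ ≤ B) (n : ℕ) : ‖f n‖ ≤ m * (2 * n + 1) ^ m * B := by
  rw [eq_sum_choose_smul_fwdDiff_iter_of_fwdDiff_iter_eq_zero hf n]
  calc ‖∑ k ∈ range m, n.choose k • (Δ_[1])^[k] f 0‖
      ≤ ∑ k ∈ range m, (2 * n + 1 : ℝ) ^ m * B := by
        refine norm_sum_le_of_le _ fun k hk => ?_
        have hkm : k < m := mem_range.mp hk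
        have hB0 : 0 ≤ B := (norm_nonneg _).trans (hB 0 (by omega))
        have hchoose : (n.choose k : ℝ) * 2 ^ k ≤ (2 * n + 1) ^ m := calc
          (n.choose k : ℝ) * 2 ^ k ≤ (2 * n) ^ k := by
            rw [mul_pow, mul_comm]
            gcongr
            exact_mod_cast Nat.choose_le_pow n k
          _ ≤ (2 * n + 1) ^ k := by gcongr; linarith
          _ ≤ (2 * n + 1) ^ m := pow_le_pow_right₀ (by linarith [n.cast_nonneg (α := ℝ)]) hkm.le
        calc ‖n.choose k • (Δ_[1])^[k] f 0‖
            ≤ n.choose k * (2 ^ k * B) := by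
              refine norm_nsmul_le.trans ?_
              exact mul_le_mul_of_nonneg_left
                (norm_fwdDiff_iter_le fun i hi => hB i (by omega)) (Nat.cast_nonneg _)
          _ ≤ (2 * n + 1) ^ m * B := by
            rw [← mul_assoc]; exact mul_le_mul_of_nonneg_right hchoose hB0
    _ = m * (2 * n + 1) ^ m * B := by rw [sum_const, card_range, nsmul_eq_mul, mul_assoc]

end Normed

lemma norm_le_one_of_isBigO_pow {𝕜 : Type*} [NormedDivisionRing 𝕜] {z : 𝕜} {k : ℕ}
    (h : (fun n : ℕ => z ^ n) =O[atTop] fun n => (n : ℝ) ^ k) : ‖z‖ ≤ 1 := by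
  by_contra! hz
  have hself : (fun n : ℕ => ‖z‖ ^ n) =o[atTop] fun n => ‖z‖ ^ n := by
    simpa only [norm_pow] using
      (h.trans_isLittleO (isLittleO_pow_const_const_pow_of_one_lt k hz)).norm_left
  exact isLittleO_irrefl (Frequently.of_forall fun n => (pow_pos (by linarith) n).ne') hself

section Spectrum

variable {𝕜 A : Type*} [NormedField 𝕜] [NormedRing A] [NormedAlgebra 𝕜 A] [CompleteSpace A]
  [NormOneClass A]

lemma spectralRadius_le_one_of_isBigO_pow {a : A} {k : ℕ}
    (h : (fun n : ℕ => ‖a ^ n‖) =O[atTop] fun n => (n : ℝ) ^ k) : spectralRadius 𝕜 a ≤ 1 := by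
  refine iSup₂_le fun z hz => ?_
  have hpow : (fun n : ℕ => z ^ n) =O[atTop] fun n => a ^ n :=
    .of_bound' (.of_forall fun n =>
      spectrum.norm_le_norm_of_mem (spectrum.pow_image_subset a n ⟨z, hz, rfl⟩))
  exact_mod_cast norm_le_one_of_isBigO_pow (hpow.norm_right.trans h)

end Spectrum

lemma tendsto_pow_nhds_zero_of_spectralRadius_lt_one {A : Type*} [NormedRing A]
    [NormedAlgebra ℂ A] [CompleteSpace A] {a : A} (h : spectralRadius ℂ a < 1) :
    Tendsto (fun n => a ^ n) atTop (𝓝 0) := by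
  obtain ⟨r, hρr, hr1⟩ := ENNReal.lt_iff_exists_nnreal_btwn.mp h
  have hle : ∀ᶠ n in atTop, ‖a ^ n‖ ≤ r ^ n := by
    have gelfand := spectrum.pow_norm_pow_one_div_tendsto_nhds_spectralRadius a
    filter_upwards [gelfand.eventually_lt_const hρr, eventually_ge_atTop 1] with n hn hn1
    rw [← ENNReal.ofReal_coe_nnreal, ENNReal.ofReal_lt_ofReal_iff_of_nonneg (by positivity)] at hn
    rw [← Real.rpow_inv_natCast_pow (norm_nonneg (a ^ n)) (by omega : n ≠ 0), ← one_div]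
    exact pow_le_pow_left₀ (by positivity) hn.le n
  exact squeeze_zero_norm' hle (tendsto_pow_atTop_nhds_zero_of_lt_one r.2 (by exact_mod_cast hr1))

section MIsometry

variable {𝕜 E : Type*} [NontriviallyNormedField 𝕜] [SeminormedAddCommGroup E] [NormedSpace 𝕜 E]

def IsMIsometry (T : E →L[𝕜] E) (m : ℕ) : Prop :=
  ∀ x : E, ∑ k ∈ range (m + 1), (-1 : ℝ) ^ k * (m.choose k : ℝ) * ‖(T ^ k) x‖ ^ 2 = 0

namespace IsMIsometry

variable {T : E →L[𝕜] E} {m : ℕ}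

theorem fwdDiff_iter_eq_zero (hT : IsMIsometry T m) (x : E) :
    (Δ_[1])^[m] (fun n => ‖(T ^ n) x‖ ^ 2) = 0 := by
  funext y
  rw [fwdDiff_iter_eq_sum_shift, Pi.zero_apply, ← mul_zero ((-1 : ℝ) ^ m), ← hT ((T ^ y) x),
    mul_sum]
  refine sum_congr rfl fun k hk => ?_
  have hkm : k ≤ m := Nat.lt_succ_iff.mp (mem_range.mp hk)
  have hsign : (-1 : ℝ) ^ (m - k) = (-1) ^ m * (-1) ^ k := by
    rw [← pow_add, show m + k = m - k + 2 * k by omega, pow_add, pow_mul, neg_one_sq, one_pow,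
      mul_one]
  rw [zsmul_eq_mul, nsmul_one, Nat.cast_id, add_comm, pow_add, mul_apply_eq_comp]
  push_cast
  rw [hsign]
  ring

theorem sq_norm_pow_apply_le (hT : IsMIsometry T m) (n : ℕ) (x : E) :
    ‖(T ^ n) x‖ ^ 2 ≤ m * (2 * n + 1) ^ m * ((∑ i ∈ range m, ‖T ^ i‖ ^ 2) * ‖x‖ ^ 2) := by
  have hB : ∀ i < m, ‖‖(T ^ i) x‖ ^ 2‖ ≤ (∑ i ∈ range m, ‖T ^ i‖ ^ 2) * ‖x‖ ^ 2 := by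
    intro i hi
    rw [Real.norm_of_nonneg (by positivity)]
    calc ‖(T ^ i) x‖ ^ 2 ≤ (‖T ^ i‖ * ‖x‖) ^ 2 := by gcongr; exact (T ^ i).le_opNorm x
      _ ≤ (∑ i ∈ range m, ‖T ^ i‖ ^ 2) * ‖x‖ ^ 2 := by
        rw [mul_pow]
        gcongr
        exact single_le_sum (f := fun i => ‖T ^ i‖ ^ 2) (fun _ _ => by positivity)
          (mem_range.mpr hi)
  simpa [Real.norm_of_nonneg] using
    norm_le_of_fwdDiff_iter_eq_zero (hT.fwdDiff_iter_eq_zero x) hB n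

theorem isBigO_norm_pow (hT : IsMIsometry T m) :
    (fun n : ℕ => ‖T ^ n‖) =O[atTop] fun n => (n : ℝ) ^ m := by
  set S := ∑ i ∈ range m, ‖T ^ i‖ ^ 2
  have hbound (n : ℕ) : ‖T ^ n‖ ≤ √(m * S) * (2 * n + 1) ^ m := by
    refine (T ^ n).opNorm_le_bound (by positivity) fun x => ?_
    have hpow : (2 * n + 1 : ℝ) ^ m ≤ ((2 * n + 1) ^ m) ^ 2 :=
      le_self_pow₀ (one_le_pow₀ (by linarith [n.cast_nonneg (α := ℝ)])) two_ne_zero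
    rw [← pow_le_pow_iff_left₀ (norm_nonneg _) (by positivity) two_ne_zero]
    calc ‖(T ^ n) x‖ ^ 2 ≤ m * (2 * n + 1) ^ m * (S * ‖x‖ ^ 2) := hT.sq_norm_pow_apply_le n x
      _ = (m * S * ‖x‖ ^ 2) * (2 * n + 1) ^ m := by ring
      _ ≤ (m * S * ‖x‖ ^ 2) * ((2 * n + 1) ^ m) ^ 2 := by gcongr
      _ = (√(m * S) * (2 * n + 1) ^ m * ‖x‖) ^ 2 := by
        rw [mul_pow, mul_pow, Real.sq_sqrt (by positivity)]; ring
  refine .of_bound (√(m * S) * 3 ^ m) ?_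
  filter_upwards [eventually_ge_atTop 1] with n hn
  have hn' : (1 : ℝ) ≤ n := by exact_mod_cast hn
  rw [norm_norm, Real.norm_of_nonneg (by positivity), mul_assoc, ← mul_pow]
  exact (hbound n).trans (by gcongr; linarith)

end IsMIsometry

end MIsometry

theorem spectralRadius_of_m_isometry_general
    {H : Type*} [NormedAddCommGroup H] [InnerProductSpace ℂ H] [CompleteSpace H]
    [Nontrivial H]
    (T : H →L[ℂ] H) (m : ℕ)
    (hT : ∀ x : H,
      ∑ k ∈ Finset.range (m + 1), (-1 : ℝ) ^ k * (m.choose k : ℝ) * ‖(T ^ k) x‖ ^ 2 = 0) :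
    spectralRadius ℂ T = 1 := by
  have hT : IsMIsometry T m := hT
  refine le_antisymm (spectralRadius_le_one_of_isBigO_pow hT.isBigO_norm_pow) ?_
  by_contra! hlt
  obtain ⟨x, hx⟩ := exists_ne (0 : H)
  have hlim : Tendsto (fun n => ‖(T ^ n) x‖ ^ 2) atTop (𝓝 0) := by
    simpa using (((ContinuousLinearMap.apply ℂ H x).continuous.tendsto 0).comp
      (tendsto_pow_nhds_zero_of_spectralRadius_lt_one hlt)).norm.pow 2
  have h0 :=
    congrFun (eq_zero_of_fwdDiff_iter_eq_zero_of_tendsto (hT.fwdDiff_iter_eq_zero x) hlim) 0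
  simp only [pow_zero, one_apply_eq_self, Pi.zero_apply, sq_eq_zero_iff, norm_eq_zero] at h0
  exact hx h0

/-- an `m`-isometry (`m ≥ 1`) on a (nonzero) complex Hilbert space has
spectral radius `1`. -/
theorem spectralRadius_of_m_isometry
    {H : Type*} [NormedAddCommGroup H] [InnerProductSpace ℂ H] [CompleteSpace H]
    [Nontrivial H]
    (T : H →L[ℂ] H) (m : ℕ) (hm : 1 ≤ m)
    (hT : ∀ x : H,
      ∑ k ∈ Finset.range (m + 1), (-1 : ℝ) ^ k * (m.choose k : ℝ) * ‖(T ^ k) x‖ ^ 2 = 0) :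
    spectralRadius ℂ T = 1 :=
  spectralRadius_of_m_isometry_general T m hT
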